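/- For every integer m ≥ 2, the sum of 1/(2 - ξ - ξ̄) over all m-th roots of unity ξ ≠ 1 equals (m² - 1)/12. -/

import Mathlib

/-!
For `ξ ^ m = 1`, `ξ ≠ 1` the summand is `1 / (2 - ξ - ξ⁻¹) = -ξ / (ξ - 1) ^ 2`, and this has the
finite Fourier expansion `∑ j < m, (j ^ 2 - m j) / (2 m) * ξ ^ j`. Summing over the roots `ξ ≠ 1`
kills every power, `∑ ξ ≠ 1, ξ ^ j = -1` for `0 < j < m`, while the `j = 0`
coefficient vanishes.
What remains is `-∑ j < m, (j ^ 2 - m j) / (2 m) = (m ^ 2 - 1) / 12` by Faulhaber's formulas.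
-/

open Finset Polynomial

section ClosedForms

variable {R : Type*} [CommRing R]

theorem two_mul_sum_range_cast (n : ℕ) : 2 * ∑ j ∈ range n, (j : R) = n * (n - 1) := by
  induction n with
  | zero => simp
  | succ n ih =>
    rw [sum_range_succ, mul_add, ih]
    push_cast
    ring

theorem six_mul_sum_range_cast_sq (n : ℕ) :
    6 * ∑ j ∈ range n, (j : R) ^ 2 = n * (n - 1) * (2 * n - 1) := by
  induction n with
  | zero => simp
  | succ n ih =>
    rw [sum_range_succ, mul_add, ih]
    push_cast
    ring

theorem sub_one_sq_mul_sum_range_mul_pow (n : ℕ) (x : R) :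
    (x - 1) ^ 2 * ∑ j ∈ range n, (j : R) * x ^ j
      = ((n : R) - 1) * x ^ (n + 1) - n * x ^ n + x := by
  induction n with
  | zero => simp
  | succ n ih =>
    rw [sum_range_succ, mul_add, ih]
    push_cast
    ring

theorem sub_one_pow_three_mul_sum_range_sq_mul_pow (n : ℕ) (x : R) :
    (x - 1) ^ 3 * ∑ j ∈ range n, (j : R) ^ 2 * x ^ j
      = ((n : R) - 1) ^ 2 * x ^ (n + 2) - (2 * n ^ 2 - 2 * n - 1) * x ^ (n + 1)
        + n ^ 2 * x ^ n - x ^ 2 - x := by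
  induction n with
  | zero => simp
  | succ n ih =>
    rw [sum_range_succ, mul_add, ih]
    push_cast
    ring

end ClosedForms

section Field

variable {K : Type*} [Field K] [CharZero K]

theorem one_div_two_sub_sub_inv_eq_sum_range {n : ℕ} (hn : n ≠ 0) {ξ : K} (hξn : ξ ^ n = 1)
    (hξ : ξ ≠ 1) :
    1 / (2 - ξ - ξ⁻¹) = ∑ j ∈ range n, ((j : K) ^ 2 - n * j) / (2 * n) * ξ ^ j := by
  have hξ0 : ξ ≠ 0 := by
    rintro rfl
    simp [hn] at hξn
  have hsub : ξ - 1 ≠ 0 := sub_ne_zero.mpr hξ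
  have hA := sub_one_sq_mul_sum_range_mul_pow n ξ
  have hB := sub_one_pow_three_mul_sum_range_sq_mul_pow n ξ
  have hξn1 : ξ ^ (n + 1) = ξ := by rw [pow_succ, hξn, one_mul]
  have hξn2 : ξ ^ (n + 2) = ξ ^ 2 := by rw [pow_add, hξn, one_mul]
  rw [hξn1, hξn] at hA
  rw [hξn2, hξn1, hξn] at hB
  have hcubic : (ξ - 1) * ((ξ - 1) ^ 2 * ∑ j ∈ range n, ((j : K) ^ 2 - n * j) * ξ ^ j)
      = (ξ - 1) * (-2 * n * ξ) := by
    simp only [sub_mul, sum_sub_distrib, mul_assoc, ← mul_sum]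
    linear_combination hB - (n : K) * (ξ - 1) * hA
  have hquad := mul_left_cancel₀ hsub hcubic
  have hden : 2 - ξ - ξ⁻¹ = -(ξ - 1) ^ 2 / ξ := by
    field_simp
    ring
  simp only [div_mul_eq_mul_div, ← sum_div]
  rw [hden, one_div_div, div_eq_div_iff (neg_ne_zero.mpr (pow_ne_zero 2 hsub)) (by simp [hn])]
  linear_combination hquad

theorem sum_range_sq_sub_mul_div (n : ℕ) (hn : n ≠ 0) :
    ∑ j ∈ range n, ((j : K) ^ 2 - n * j) / (2 * n) = -((n : K) ^ 2 - 1) / 12 := by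
  have h1 := two_mul_sum_range_cast (R := K) n
  have h2 := six_mul_sum_range_cast_sq (R := K) n
  rw [← sum_div, sum_sub_distrib, ← mul_sum]
  field_simp
  linear_combination 2 * h2 - 6 * (n : K) * h1

end Field

theorem IsPrimitiveRoot.sum_nthRoots_one_erase_one_pow {R : Type*} [CommRing R] [IsDomain R]
    [DecidableEq R] {m j : ℕ} {ζ : R} (hζ : IsPrimitiveRoot ζ m) (hj0 : 0 < j) (hjm : j < m) :
    ∑ ξ ∈ (nthRoots m (1 : R)).toFinset.erase 1, ξ ^ j = -1 := by
  have h1 : (1 : R) ∈ (nthRoots m (1 : R)).toFinset := by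
    simp [mem_nthRoots (hj0.trans hjm)]
  rw [sum_erase_eq_sub h1, one_pow, sub_eq_neg_self]
  have hroots : (nthRoots m (1 : R)).toFinset = (range m).image (ζ ^ ·) := by
    simp [hζ.nthRoots_eq (one_pow m), Multiset.toFinset_map]
  have hζj : ζ ^ j ≠ 1 := hζ.pow_ne_one_of_pos_of_lt hj0.ne' hjm
  have hgeom : (∑ i ∈ range m, (ζ ^ j) ^ i) * (ζ ^ j - 1) = 0 := by
    rw [geom_sum_mul, ← pow_mul, mul_comm, pow_mul, hζ.pow_eq_one, one_pow, sub_self]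
  rw [hroots, sum_image hζ.injOn_pow]
  simpa [← pow_mul, mul_comm, sub_eq_zero, hζj] using hgeom

theorem stmt_3 (m : ℕ) (hm : 2 ≤ m) :
    ∑ ξ ∈ ((Polynomial.nthRoots m (1 : ℂ)).toFinset.erase 1),
        1 / (2 - ξ - (starRingEnd ℂ) ξ)
      = ((m : ℂ) ^ 2 - 1) / 12 := by
  have hm0 : m ≠ 0 := by omega
  obtain ⟨ζ, hζ⟩ : ∃ ζ : ℂ, IsPrimitiveRoot ζ m := ⟨_, Complex.isPrimitiveRoot_exp m hm0⟩
  have hfourier : ∀ ξ ∈ (nthRoots m (1 : ℂ)).toFinset.erase 1, 1 / (2 - ξ - starRingEnd ℂ ξ)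
      = ∑ j ∈ range m, ((j : ℂ) ^ 2 - m * j) / (2 * m) * ξ ^ j := by
    intro ξ hξ
    obtain ⟨hξ1, hξm⟩ : ξ ≠ 1 ∧ ξ ^ m = 1 := by
      simpa [mem_nthRoots (Nat.pos_of_ne_zero hm0)] using hξ
    rw [← Complex.inv_eq_conj (Complex.norm_eq_one_of_pow_eq_one hξm hm0)]
    exact one_div_two_sub_sub_inv_eq_sum_range hm0 hξm hξ1
  have hpowers : ∀ j ∈ range m, ∑ ξ ∈ (nthRoots m (1 : ℂ)).toFinset.erase 1,
      ((j : ℂ) ^ 2 - m * j) / (2 * m) * ξ ^ j = -(((j : ℂ) ^ 2 - m * j) / (2 * m)) := by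
    intro j hj
    rcases j.eq_zero_or_pos with rfl | hj0
    · simp
    · rw [← mul_sum, hζ.sum_nthRoots_one_erase_one_pow hj0 (mem_range.mp hj), mul_neg_one]
  rw [sum_congr rfl hfourier, sum_comm, sum_congr rfl hpowers, sum_neg_distrib,
    sum_range_sq_sub_mul_div m hm0, neg_div, neg_neg]
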